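/- arXiv:2312.14330 — 3 statements merged into one kernel-verified Lean document; each statement's English description precedes it below -/
import Mathlib

section
/- For every integer p ≥ 1 there exist pairwise distinct points z₁ = (x₁, y₁), …, z_p = (x_p, y_p) in ℝ₊² such that τ(z₁, …, z_p) ≤ 4p². -/
open Finset in
noncomputable def f (x₁ x₂ y₁ y₂ : ℝ) : ℝ :=
  ((x₁ - x₂)^2 + (y₁ - y₂)^2) * ((x₁ + x₂)^2 + (y₁ - y₂)^2) *
  ((x₁ - x₂)^2 + (y₁ + y₂)^2) * ((x₁ + x₂)^2 + (y₁ + y₂)^2)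

open Finset in
noncomputable def tau {p : ℕ} (z : Fin p → ℝ × ℝ) : ℝ :=
  (∑ k, ((1/2) * ((z k).1^2 + (z k).2^2)
      - Real.log ((z k).1 * (z k).2 * Real.sqrt ((z k).1^2 + (z k).2^2))))
  - (1/2) * ∑ k, ∑ ℓ ∈ univ.filter (fun ℓ => ℓ ≠ k),
      Real.log (f (z k).1 (z ℓ).1 (z k).2 (z ℓ).2)

theorem stmt_3 (p : ℕ) (hp : 1 ≤ p) :
    ∃ z : Fin p → ℝ × ℝ, Function.Injective z ∧
      (∀ k, 0 < (z k).1 ∧ 0 < (z k).2) ∧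
      tau z ≤ 4 * (p : ℝ)^2 := by
  set a : Fin p → ℝ := fun k => Real.sqrt ((k : ℝ) + 1) with ha
  have hnn : ∀ k : Fin p, (0:ℝ) ≤ (k : ℝ) + 1 := fun k => by positivity
  have ha2 : ∀ k : Fin p, (a k) ^ 2 = (k : ℝ) + 1 := fun k =>
    Real.sq_sqrt (hnn k)
  have ha1 : ∀ k : Fin p, 1 ≤ a k := fun k => by
    rw [ha]
    have : (1:ℝ) = Real.sqrt 1 := (Real.sqrt_one).symm
    rw [this]
    exact Real.sqrt_le_sqrt (by push_cast; linarith [Nat.cast_nonneg (α := ℝ) (k : ℕ)])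
  have hapos : ∀ k : Fin p, 0 < a k := fun k => lt_of_lt_of_le one_pos (ha1 k)
  refine ⟨fun k => (a k, a k), ?_, ?_, ?_⟩
  · intro j k h
    have h1 : a j = a k := congrArg Prod.fst h
    have h2 : (j : ℝ) + 1 = (k : ℝ) + 1 := by
      rw [← ha2 j, ← ha2 k, h1]
    have h3 : (j : ℝ) = (k : ℝ) := by linarith
    have : (j : ℕ) = (k : ℕ) := by exact_mod_cast h3
    exact Fin.ext this
  · intro k; exact ⟨hapos k, hapos k⟩
  · -- interaction logs are nonneg
    have hf : ∀ j k : Fin p, j ≠ k →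
        (1:ℝ) ≤ f (a j) (a k) (a j) (a k) := by
      intro j k hjk
      have hD : (0:ℝ) ≤ (a j - a k)^2 := sq_nonneg _
      have hS : (4:ℝ) ≤ (a j + a k)^2 := by nlinarith [ha1 j, ha1 k]
      have hDS : (1:ℝ) ≤ (a j - a k)^2 * (a j + a k)^2 := by
        have hjk' : (1:ℝ) ≤ ((j : ℝ) - (k : ℝ))^2 := by
          have : (j : ℕ) ≠ (k : ℕ) := fun h => hjk (Fin.ext h)
          rcases lt_or_gt_of_ne this with h | h
          · have : (j : ℝ) + 1 ≤ (k : ℝ) := by exact_mod_cast h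
            nlinarith
          · have : (k : ℝ) + 1 ≤ (j : ℝ) := by exact_mod_cast h
            nlinarith
        have : (a j - a k)^2 * (a j + a k)^2 = ((a j)^2 - (a k)^2)^2 := by ring
        rw [this, ha2 j, ha2 k]
        have : ((j:ℝ) + 1 - ((k:ℝ) + 1))^2 = ((j:ℝ) - (k:ℝ))^2 := by ring
        rw [this]; exact hjk'
      have hS0 : (0:ℝ) ≤ (a j + a k)^2 := sq_nonneg _
      have hsq : ((a j + a k)^2)^2 ≤ ((a j + a k)^2 + (a j - a k)^2)^2 := by nlinarith
      have hmul : 1 * ((a j + a k)^2)^2 ≤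
          ((a j - a k)^2 * (a j + a k)^2) * ((a j + a k)^2 + (a j - a k)^2)^2 :=
        mul_le_mul hDS hsq (by positivity) (le_trans zero_le_one hDS)
      have h16 : (16:ℝ) ≤ ((a j + a k)^2)^2 := by nlinarith
      unfold f
      nlinarith [hmul, h16]
    have hT : (0:ℝ) ≤ ∑ k, ∑ ℓ ∈ Finset.univ.filter (fun ℓ => ℓ ≠ k),
        Real.log (f (a k) (a ℓ) (a k) (a ℓ)) := by
      apply Finset.sum_nonneg
      intro k _
      apply Finset.sum_nonneg
      intro ℓ hℓ
      have hℓk : ℓ ≠ k := (Finset.mem_filter.mp hℓ).2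
      exact Real.log_nonneg (hf k ℓ hℓk.symm)
    have hself : ∀ k : Fin p,
        (1/2) * ((a k)^2 + (a k)^2)
          - Real.log ((a k) * (a k) * Real.sqrt ((a k)^2 + (a k)^2)) ≤ (p : ℝ) := by
      intro k
      have hkp : (k : ℝ) + 1 ≤ (p : ℝ) := by
        have := k.isLt
        exact_mod_cast Nat.succ_le_of_lt this
      have hlog : 0 ≤ Real.log ((a k) * (a k) * Real.sqrt ((a k)^2 + (a k)^2)) := by
        apply Real.log_nonneg
        have h1 : (1:ℝ) ≤ a k * a k := by nlinarith [ha1 k]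
        have h2 : (1:ℝ) ≤ Real.sqrt ((a k)^2 + (a k)^2) := by
          rw [show (1:ℝ) = Real.sqrt 1 from (Real.sqrt_one).symm]
          apply Real.sqrt_le_sqrt
          nlinarith [ha1 k]
        nlinarith
      have : (1/2) * ((a k)^2 + (a k)^2) = (k : ℝ) + 1 := by
        rw [ha2 k]; ring
      rw [this]
      linarith
    have hS1 : (∑ k : Fin p, ((1/2) * ((a k)^2 + (a k)^2)
        - Real.log ((a k) * (a k) * Real.sqrt ((a k)^2 + (a k)^2)))) ≤ (p : ℝ)^2 := by
      calc _ ≤ ∑ _k : Fin p, (p : ℝ) := Finset.sum_le_sum (fun k _ => hself k)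
        _ = (p : ℝ) * (p : ℝ) := by simp [mul_comm]
        _ = (p : ℝ)^2 := by ring
    unfold tau
    simp only
    have hp2 : (p : ℝ)^2 ≤ 4 * (p : ℝ)^2 := by nlinarith [sq_nonneg (p : ℝ)]
    linarith
end

section
/- Let p ≥ 1 be an integer and let K ≥ 3p be a real number satisfying ½K² − (3p + 4p²)·log K − (p²/2)·log 400 − 4p² > 0. Suppose z₁ = (x₁, y₁), …, z_p = (x_p, y_p) are pairwise distinct points in ℝ₊² with τ(z₁, …, z_p) ≤ 4p². Then √(x_k² + y_k²) ≤ K for every k with 1 ≤ k ≤ p. -/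
lemma aux_g (r : ℝ) (hr : 0 < r) :
    3/2 - (3/2) * Real.log 3 ≤ 1/2 * r^2 - 3 * Real.log r := by
  have h1 : Real.log (r^2/3) ≤ r^2/3 - 1 := Real.log_le_sub_one_of_pos (by positivity)
  have h2 : Real.log (r^2/3) = 2 * Real.log r - Real.log 3 := by
    rw [Real.log_div (by positivity) (by norm_num), Real.log_pow]
    push_cast; ring
  nlinarith [h1, h2]

lemma aux_prod4 {a b c d M : ℝ} (ha : 0 ≤ a) (hb : 0 ≤ b) (hc : 0 ≤ c) (hd : 0 ≤ d)
    (haM : a ≤ M) (hbM : b ≤ M) (hcM : c ≤ M) (hdM : d ≤ M) : a*b*c*d ≤ M^4 := by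
  have hM : 0 ≤ M := le_trans ha haM
  calc a*b*c*d ≤ M*M*M*M := by
        apply mul_le_mul (mul_le_mul (mul_le_mul haM hbM hb hM) hcM hc (by positivity)) hdM hd
          (by positivity)
    _ = M^4 := by ring

set_option maxHeartbeats 1600000 in
theorem stmt_4 (p : ℕ) (hp : 1 ≤ p) (K : ℝ) (hK : 3 * (p : ℝ) ≤ K)
    (hKineq : (1/2) * K^2 - (3 * (p : ℝ) + 4 * (p : ℝ)^2) * Real.log K
      - ((p : ℝ)^2 / 2) * Real.log 400 - 4 * (p : ℝ)^2 > 0)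
    (z : Fin p → ℝ × ℝ) (hinj : Function.Injective z)
    (hpos : ∀ k, 0 < (z k).1 ∧ 0 < (z k).2)
    (hτ : tau z ≤ 4 * (p : ℝ)^2) :
    ∀ k, Real.sqrt ((z k).1^2 + (z k).2^2) ≤ K := by
  have hq1 : (1:ℝ) ≤ (p:ℝ) := by exact_mod_cast hp
  have hK3 : (3:ℝ) ≤ K := by
    have h3p : (3:ℝ) ≤ 3 * (p:ℝ) := by linarith
    linarith
  -- r is positive
  have hrpos : ∀ k, 0 < Real.sqrt ((z k).1^2 + (z k).2^2) := fun k =>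
    Real.sqrt_pos.2 (by nlinarith [(hpos k).1, (hpos k).2])
  have hrsq : ∀ k, Real.sqrt ((z k).1^2 + (z k).2^2) ^ 2 = (z k).1^2 + (z k).2^2 := fun k =>
    Real.sq_sqrt (by positivity)
  -- the max point
  obtain ⟨m, -, hm⟩ := Finset.exists_max_image Finset.univ
    (fun k => Real.sqrt ((z k).1^2 + (z k).2^2)) ⟨⟨0, hp⟩, Finset.mem_univ _⟩
  have hmk : ∀ k, Real.sqrt ((z k).1^2 + (z k).2^2)
      ≤ Real.sqrt ((z m).1^2 + (z m).2^2) := fun k => hm k (Finset.mem_univ _)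
  set R := Real.sqrt ((z m).1^2 + (z m).2^2) with hRdef
  have hRpos : 0 < R := hrpos m
  suffices hRK : R ≤ K by
    intro k; exact le_trans (hmk k) hRK
  by_contra hcon
  push_neg at hcon  -- K < R
  -- first sum bound: each term ≥ 1/2 r^2 - 3 log r
  have hterm : ∀ k, 1/2 * Real.sqrt ((z k).1^2 + (z k).2^2) ^ 2
      - 3 * Real.log (Real.sqrt ((z k).1^2 + (z k).2^2))
      ≤ (1/2) * ((z k).1^2 + (z k).2^2)
      - Real.log ((z k).1 * (z k).2 * Real.sqrt ((z k).1^2 + (z k).2^2)) := by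
    intro k
    set rk := Real.sqrt ((z k).1^2 + (z k).2^2) with hrk
    have hx := (hpos k).1
    have hy := (hpos k).2
    have hxr : (z k).1 ≤ rk := by
      rw [hrk]
      calc (z k).1 = Real.sqrt ((z k).1^2) := by rw [Real.sqrt_sq hx.le]
        _ ≤ _ := Real.sqrt_le_sqrt (by nlinarith)
    have hyr : (z k).2 ≤ rk := by
      rw [hrk]
      calc (z k).2 = Real.sqrt ((z k).2^2) := by rw [Real.sqrt_sq hy.le]
        _ ≤ _ := Real.sqrt_le_sqrt (by nlinarith)
    have hrkpos : 0 < rk := hrpos k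
    have hxy : (z k).1 * (z k).2 ≤ rk * rk := mul_le_mul hxr hyr hy.le hrkpos.le
    have hle : (z k).1 * (z k).2 * rk ≤ rk ^ 3 := by
      nlinarith [mul_le_mul_of_nonneg_right hxy hrkpos.le]
    have hlog : Real.log ((z k).1 * (z k).2 * rk) ≤ 3 * Real.log rk := by
      calc Real.log ((z k).1 * (z k).2 * rk) ≤ Real.log (rk ^ 3) :=
            Real.log_le_log (by positivity) hle
        _ = 3 * Real.log rk := by rw [Real.log_pow]; norm_num
    rw [hrsq k]
    linarith
  -- pairwise f positivity and upper bound
  have hfub : ∀ k ℓ : Fin p, k ≠ ℓ →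
      Real.log (f (z k).1 (z ℓ).1 (z k).2 (z ℓ).2) ≤ 8 * (Real.log 2 + Real.log R) := by
    intro k ℓ hkl
    have hx := (hpos k).1; have hy := (hpos k).2
    have hx' := (hpos ℓ).1; have hy' := (hpos ℓ).2
    have hzne : z k ≠ z ℓ := fun h => hkl (hinj h)
    have hne : (z k).1 ≠ (z ℓ).1 ∨ (z k).2 ≠ (z ℓ).2 := by
      by_contra h
      push_neg at h
      exact hzne (Prod.ext h.1 h.2)
    have hfpos : 0 < f (z k).1 (z ℓ).1 (z k).2 (z ℓ).2 := by
      unfold f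
      have h1 : 0 < ((z k).1 - (z ℓ).1)^2 + ((z k).2 - (z ℓ).2)^2 := by
        rcases hne with h | h
        · have h0 : ((z k).1 - (z ℓ).1) ≠ 0 := sub_ne_zero.mpr h
          have : 0 < ((z k).1 - (z ℓ).1)^2 := by positivity
          nlinarith [sq_nonneg ((z k).2 - (z ℓ).2)]
        · have h0 : ((z k).2 - (z ℓ).2) ≠ 0 := sub_ne_zero.mpr h
          have : 0 < ((z k).2 - (z ℓ).2)^2 := by positivity
          nlinarith [sq_nonneg ((z k).1 - (z ℓ).1)]
      have h2 : 0 < ((z k).1 + (z ℓ).1)^2 + ((z k).2 - (z ℓ).2)^2 := by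
        nlinarith [mul_pos (add_pos hx hx') (add_pos hx hx'), sq_nonneg ((z k).2 - (z ℓ).2)]
      have h3 : 0 < ((z k).1 - (z ℓ).1)^2 + ((z k).2 + (z ℓ).2)^2 := by
        nlinarith [mul_pos (add_pos hy hy') (add_pos hy hy'), sq_nonneg ((z k).1 - (z ℓ).1)]
      have h4 : 0 < ((z k).1 + (z ℓ).1)^2 + ((z k).2 + (z ℓ).2)^2 := by
        nlinarith [mul_pos (add_pos hx hx') (add_pos hx hx'), sq_nonneg ((z k).2 + (z ℓ).2)]
      exact mul_pos (mul_pos (mul_pos h1 h2) h3) h4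
    have hk2 : (z k).1^2 + (z k).2^2 ≤ R^2 := by
      have := hmk k
      nlinarith [hrsq k, (hrpos k).le, hRpos.le]
    have hl2 : (z ℓ).1^2 + (z ℓ).2^2 ≤ R^2 := by
      have := hmk ℓ
      nlinarith [hrsq ℓ, (hrpos ℓ).le, hRpos.le]
    have hfle : f (z k).1 (z ℓ).1 (z k).2 (z ℓ).2 ≤ (4 * R^2)^4 := by
      unfold f
      apply aux_prod4
      · positivity
      · positivity
      · positivity
      · positivity
      · nlinarith [sq_nonneg ((z k).1 + (z ℓ).1), sq_nonneg ((z k).2 + (z ℓ).2)]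
      · nlinarith [sq_nonneg ((z k).1 - (z ℓ).1), sq_nonneg ((z k).2 + (z ℓ).2)]
      · nlinarith [sq_nonneg ((z k).1 + (z ℓ).1), sq_nonneg ((z k).2 - (z ℓ).2)]
      · nlinarith [sq_nonneg ((z k).1 - (z ℓ).1), sq_nonneg ((z k).2 - (z ℓ).2)]
    have h2R : (4 * R^2)^4 = (2*R)^8 := by ring
    calc Real.log (f (z k).1 (z ℓ).1 (z k).2 (z ℓ).2)
        ≤ Real.log ((2*R)^8) := Real.log_le_log hfpos (by rw [← h2R]; exact hfle)
      _ = 8 * (Real.log 2 + Real.log R) := by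
          rw [Real.log_pow, Real.log_mul (by norm_num) hRpos.ne']; norm_num
  -- bound for the double sum
  have hS2 : ∑ k, ∑ ℓ ∈ Finset.univ.filter (fun ℓ => ℓ ≠ k),
      Real.log (f (z k).1 (z ℓ).1 (z k).2 (z ℓ).2)
      ≤ (p:ℝ) * ((p:ℝ) - 1) * (8 * (Real.log 2 + Real.log R)) := by
    have hcard : ∀ k : Fin p, ((Finset.univ.filter (fun ℓ => ℓ ≠ k)).card : ℝ)
        = (p:ℝ) - 1 := by
      intro k
      rw [Finset.filter_ne', Finset.card_erase_of_mem (Finset.mem_univ _)]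
      simp [Nat.cast_sub hp]
    calc ∑ k, ∑ ℓ ∈ Finset.univ.filter (fun ℓ => ℓ ≠ k),
          Real.log (f (z k).1 (z ℓ).1 (z k).2 (z ℓ).2)
        ≤ ∑ k : Fin p, ((p:ℝ) - 1) * (8 * (Real.log 2 + Real.log R)) := by
          apply Finset.sum_le_sum
          intro k _
          calc ∑ ℓ ∈ Finset.univ.filter (fun ℓ => ℓ ≠ k),
                Real.log (f (z k).1 (z ℓ).1 (z k).2 (z ℓ).2)
              ≤ ∑ ℓ ∈ Finset.univ.filter (fun ℓ => ℓ ≠ k),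
                (8 * (Real.log 2 + Real.log R)) := by
                apply Finset.sum_le_sum
                intro ℓ hℓ
                have : ℓ ≠ k := by simpa using hℓ
                exact hfub k ℓ this.symm
            _ = ((p:ℝ) - 1) * (8 * (Real.log 2 + Real.log R)) := by
                rw [Finset.sum_const, nsmul_eq_mul, hcard k]
      _ = (p:ℝ) * ((p:ℝ) - 1) * (8 * (Real.log 2 + Real.log R)) := by
          rw [Finset.sum_const, nsmul_eq_mul]
          simp [Finset.card_univ]
          ring
  -- bound for the single sum
  have hS1 : 1/2 * R^2 - 3 * Real.log R + ((p:ℝ) - 1) * (3/2 - (3/2) * Real.log 3)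
      ≤ ∑ k, ((1/2) * ((z k).1^2 + (z k).2^2)
        - Real.log ((z k).1 * (z k).2 * Real.sqrt ((z k).1^2 + (z k).2^2))) := by
    have step1 : ∑ k, (1/2 * Real.sqrt ((z k).1^2 + (z k).2^2) ^ 2
        - 3 * Real.log (Real.sqrt ((z k).1^2 + (z k).2^2)))
        ≤ ∑ k, ((1/2) * ((z k).1^2 + (z k).2^2)
        - Real.log ((z k).1 * (z k).2 * Real.sqrt ((z k).1^2 + (z k).2^2))) :=
      Finset.sum_le_sum (fun k _ => hterm k)
    refine le_trans ?_ step1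
    rw [← Finset.add_sum_erase Finset.univ _ (Finset.mem_univ m)]
    have herase : ((p:ℝ) - 1) * (3/2 - (3/2) * Real.log 3)
        ≤ ∑ k ∈ Finset.univ.erase m, (1/2 * Real.sqrt ((z k).1^2 + (z k).2^2) ^ 2
          - 3 * Real.log (Real.sqrt ((z k).1^2 + (z k).2^2))) := by
      have := Finset.card_nsmul_le_sum (Finset.univ.erase m)
        (fun k => 1/2 * Real.sqrt ((z k).1^2 + (z k).2^2) ^ 2
          - 3 * Real.log (Real.sqrt ((z k).1^2 + (z k).2^2)))
        (3/2 - (3/2) * Real.log 3)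
        (fun k _ => aux_g _ (hrpos k))
      rw [Finset.card_erase_of_mem (Finset.mem_univ _), nsmul_eq_mul] at this
      have hc : ((Fintype.card (Fin p) - 1 : ℕ) : ℝ) = (p:ℝ) - 1 := by
        simp [Nat.cast_sub hp]
      rw [Finset.card_univ] at this
      rw [← hc]
      exact this
    linarith
  -- the final inequalities
  have hlogK : 0 < Real.log K := Real.log_pos (by linarith)
  have hlogRK : Real.log R - Real.log K ≤ R / K - 1 := by
    have h := Real.log_le_sub_one_of_pos (show 0 < R / K by positivity)
    rwa [Real.log_div hRpos.ne' (by linarith)] at h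
  have hlogR_nonneg : Real.log K ≤ Real.log R := Real.log_le_log (by linarith) hcon.le
  -- (3 + 4p(p-1)) (log R - log K) ≤ 1/2 R^2 - 1/2 K^2
  have hA : (3 + 4 * (p:ℝ) * ((p:ℝ) - 1)) ≤ K^2 := by nlinarith
  have hKmul : K * (Real.log R - Real.log K) ≤ R - K := by
    have hKpos : (0:ℝ) < K := by linarith
    have := mul_le_mul_of_nonneg_left hlogRK hKpos.le
    calc K * (Real.log R - Real.log K) ≤ K * (R / K - 1) := this
      _ = R - K := by field_simp
  have hmono : (3 + 4 * (p:ℝ) * ((p:ℝ) - 1)) * (Real.log R - Real.log K)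
      ≤ 1/2 * R^2 - 1/2 * K^2 := by
    have hd : 0 ≤ Real.log R - Real.log K := by linarith
    have h1 : (3 + 4 * (p:ℝ) * ((p:ℝ) - 1)) * (Real.log R - Real.log K)
        ≤ K^2 * (Real.log R - Real.log K) := mul_le_mul_of_nonneg_right hA hd
    have h2 : K^2 * (Real.log R - Real.log K) ≤ K * (R - K) := by
      have hKpos : (0:ℝ) < K := by linarith
      calc K^2 * (Real.log R - Real.log K) = K * (K * (Real.log R - Real.log K)) := by ring
        _ ≤ K * (R - K) := mul_le_mul_of_nonneg_left hKmul hKpos.le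
    nlinarith
  -- numeric log facts
  have hlog2 : 0 < Real.log 2 := Real.log_pos (by norm_num)
  have hlog3 : Real.log 3 ≤ 2 * Real.log 2 := by
    calc Real.log 3 ≤ Real.log 4 := Real.log_le_log (by norm_num) (by norm_num)
      _ = 2 * Real.log 2 := by
          rw [show (4:ℝ) = 2^2 by norm_num, Real.log_pow]; norm_num
  have hlog400 : 8 * Real.log 2 ≤ Real.log 400 := by
    calc 8 * Real.log 2 = Real.log (2^8) := by rw [Real.log_pow]; norm_num
      _ ≤ Real.log 400 := Real.log_le_log (by norm_num) (by norm_num)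
  -- combine
  unfold tau at hτ
  nlinarith [hτ, hS1, hS2, hmono, hKineq, hlogK, hlog2, hlog3, hlog400, hq1,
    mul_nonneg (sub_nonneg.2 hq1) hlogK.le,
    mul_nonneg (sub_nonneg.2 hq1) hlog2.le, hlogR_nonneg]
end

section
/- Let q ≥ 1 be an integer and set p = q². Let z₁, …, z_p be an enumeration of the grid S_q = {(i, j) : 1 ≤ i ≤ q, 1 ≤ j ≤ q} ⊆ ℝ₊². Then τ(z₁, …, z_p) ≤ q⁴. -/
theorem stmt_16 (q : ℕ) (hq : 1 ≤ q) (z : Fin (q^2) → ℝ × ℝ)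
    (hinj : Function.Injective z)
    (hrange : Set.range z =
      {w : ℝ × ℝ | ∃ i j : ℕ, 1 ≤ i ∧ i ≤ q ∧ 1 ≤ j ∧ j ≤ q ∧ w = ((i : ℝ), (j : ℝ))}) :
    tau z ≤ (q : ℝ)^4 := by
  have hz : ∀ k, ∃ i j : ℕ, 1 ≤ i ∧ i ≤ q ∧ 1 ≤ j ∧ j ≤ q ∧ z k = ((i:ℝ),(j:ℝ)) := by
    intro k
    have hk : z k ∈ Set.range z := ⟨k, rfl⟩
    rw [hrange] at hk
    exact hk
  have h1 : ∀ k, (1/2) * ((z k).1^2 + (z k).2^2)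
      - Real.log ((z k).1 * (z k).2 * Real.sqrt ((z k).1^2 + (z k).2^2)) ≤ (q:ℝ)^2 := by
    intro k
    obtain ⟨i, j, hi1, hiq, hj1, hjq, hk⟩ := hz k
    rw [hk]
    have hi1' : (1:ℝ) ≤ (i:ℝ) := by exact_mod_cast hi1
    have hiq' : (i:ℝ) ≤ (q:ℝ) := by exact_mod_cast hiq
    have hj1' : (1:ℝ) ≤ (j:ℝ) := by exact_mod_cast hj1
    have hjq' : (j:ℝ) ≤ (q:ℝ) := by exact_mod_cast hjq
    simp only
    have hsq : (1:ℝ) ≤ Real.sqrt ((i:ℝ)^2 + (j:ℝ)^2) := by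
      rw [show (1:ℝ) = Real.sqrt 1 by simp]
      apply Real.sqrt_le_sqrt
      nlinarith
    have hlog : 0 ≤ Real.log ((i:ℝ) * (j:ℝ) * Real.sqrt ((i:ℝ)^2 + (j:ℝ)^2)) := by
      apply Real.log_nonneg
      exact one_le_mul_of_one_le_of_one_le (one_le_mul_of_one_le_of_one_le hi1' hj1') hsq
    nlinarith
  have hgap : ∀ (a b : ℕ), a ≠ b → (1:ℝ) ≤ ((a:ℝ) - (b:ℝ))^2 := by
    intro a b hab
    have h : ((a:ℤ) - (b:ℤ)) ≠ 0 := sub_ne_zero.mpr (by exact_mod_cast hab)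
    have h1 : (1:ℤ) ≤ |(a:ℤ) - (b:ℤ)| := Int.one_le_abs h
    have h2 : (1:ℝ) ≤ |(a:ℝ) - (b:ℝ)| := by exact_mod_cast h1
    nlinarith [sq_abs ((a:ℝ) - (b:ℝ)), abs_nonneg ((a:ℝ) - (b:ℝ))]
  have h2 : ∀ k, ∀ ℓ ∈ Finset.univ.filter (fun ℓ => ℓ ≠ k),
      0 ≤ Real.log (f (z k).1 (z ℓ).1 (z k).2 (z ℓ).2) := by
    intro k ℓ hℓ
    have hne : ℓ ≠ k := (Finset.mem_filter.mp hℓ).2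
    obtain ⟨i, j, hi1, hiq, hj1, hjq, hk⟩ := hz k
    obtain ⟨i', j', hi1', hiq', hj1', hjq', hl⟩ := hz ℓ
    apply Real.log_nonneg
    have hzne : z k ≠ z ℓ := fun h => hne (hinj h).symm
    have hij : i ≠ i' ∨ j ≠ j' := by
      by_contra h
      push_neg at h
      exact hzne (by rw [hk, hl, h.1, h.2])
    rw [hk, hl]
    unfold f
    simp only
    have hi1r : (1:ℝ) ≤ (i:ℝ) := by exact_mod_cast hi1
    have hi1r' : (1:ℝ) ≤ (i':ℝ) := by exact_mod_cast hi1'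
    have hj1r : (1:ℝ) ≤ (j:ℝ) := by exact_mod_cast hj1
    have hj1r' : (1:ℝ) ≤ (j':ℝ) := by exact_mod_cast hj1'
    have hA : (1:ℝ) ≤ ((i:ℝ) - (i':ℝ))^2 + ((j:ℝ) - (j':ℝ))^2 := by
      rcases hij with h | h
      · nlinarith [hgap i i' h, sq_nonneg ((j:ℝ) - (j':ℝ))]
      · nlinarith [hgap j j' h, sq_nonneg ((i:ℝ) - (i':ℝ))]
    have hB : (1:ℝ) ≤ ((i:ℝ) + (i':ℝ))^2 + ((j:ℝ) - (j':ℝ))^2 := by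
      nlinarith [sq_nonneg ((j:ℝ) - (j':ℝ))]
    have hC : (1:ℝ) ≤ ((i:ℝ) - (i':ℝ))^2 + ((j:ℝ) + (j':ℝ))^2 := by
      nlinarith [sq_nonneg ((i:ℝ) - (i':ℝ))]
    have hD : (1:ℝ) ≤ ((i:ℝ) + (i':ℝ))^2 + ((j:ℝ) + (j':ℝ))^2 := by
      nlinarith
    have hAB : (1:ℝ) ≤ (((i:ℝ) - (i':ℝ))^2 + ((j:ℝ) - (j':ℝ))^2) *
        (((i:ℝ) + (i':ℝ))^2 + ((j:ℝ) - (j':ℝ))^2) := one_le_mul_of_one_le_of_one_le hA hB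
    have hABC : (1:ℝ) ≤ (((i:ℝ) - (i':ℝ))^2 + ((j:ℝ) - (j':ℝ))^2) *
        (((i:ℝ) + (i':ℝ))^2 + ((j:ℝ) - (j':ℝ))^2) *
        (((i:ℝ) - (i':ℝ))^2 + ((j:ℝ) + (j':ℝ))^2) := one_le_mul_of_one_le_of_one_le hAB hC
    exact one_le_mul_of_one_le_of_one_le hABC hD
  unfold tau
  have hsum1 : ∑ k, ((1/2) * ((z k).1^2 + (z k).2^2)
      - Real.log ((z k).1 * (z k).2 * Real.sqrt ((z k).1^2 + (z k).2^2)))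
      ≤ ∑ _k : Fin (q^2), (q:ℝ)^2 := Finset.sum_le_sum (fun k _ => h1 k)
  have hsum2 : 0 ≤ ∑ k, ∑ ℓ ∈ Finset.univ.filter (fun ℓ => ℓ ≠ k),
      Real.log (f (z k).1 (z ℓ).1 (z k).2 (z ℓ).2) :=
    Finset.sum_nonneg (fun k _ => Finset.sum_nonneg (h2 k))
  have hconst : ∑ _k : Fin (q^2), (q:ℝ)^2 = (q:ℝ)^4 := by
    rw [Finset.sum_const, Finset.card_univ, Fintype.card_fin]
    push_cast
    ring
  linarith
end
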